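/- In the setting of the previous statement, the Bregman divergence of G satisfies the upper bound D_G(x',y'; x,y) ≤ (1/2)·max{L_f + μ_f, μ_f·((μ_A + L_A)/L_A)·(L_{W'}/μ_{W'})}·(‖x'−x‖² + ‖y'−y‖²) for all x, x', y, y'. -/

import Mathlib

open Matrix

/-!
The quadratic penalty contributes exactly `(r/2)‖AΔx + γW'Δy‖²` to the Bregman divergence of `G`
(symmetry of `W'` identifies the `y`-part of the gradient as an adjoint), and `D_F ≤ (L_f/2)‖Δx‖²`.
Splitting `‖AΔx + γW'Δy‖² ≤ 2L_A‖Δx‖² + 2γ²L_{W'}‖Δy‖²`, the choice `r = μ_f/(2L_A)` turns the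
`Δx`-coefficient into `(L_f + μ_f)/2`, while `rγ²L_{W'}` is half the second entry of the max.
-/

section DotProduct

variable {n R : Type*} [Fintype n] [CommRing R]

theorem dotProduct_add_self (u v : n → R) :
    (u + v) ⬝ᵥ (u + v) = u ⬝ᵥ u + 2 * (u ⬝ᵥ v) + v ⬝ᵥ v := by
  simp only [dotProduct_add, add_dotProduct, dotProduct_comm v u]
  ring

theorem dotProduct_sub_self (u v : n → R) :
    (u - v) ⬝ᵥ (u - v) = u ⬝ᵥ u - 2 * (u ⬝ᵥ v) + v ⬝ᵥ v := by
  simp only [dotProduct_sub, sub_dotProduct, dotProduct_comm v u]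
  ring

variable [LinearOrder R] [IsStrictOrderedRing R]

theorem dotProduct_self_nonneg (v : n → R) : 0 ≤ v ⬝ᵥ v :=
  Fintype.sum_nonneg fun i => mul_self_nonneg (v i)

theorem dotProduct_add_self_le (u v : n → R) :
    (u + v) ⬝ᵥ (u + v) ≤ 2 * (u ⬝ᵥ u) + 2 * (v ⬝ᵥ v) := by
  have := dotProduct_self_nonneg (u - v)
  rw [dotProduct_sub_self] at this
  rw [dotProduct_add_self]
  linarith

end DotProduct

theorem mul_add_mul_le_max_mul_add {a b s t : ℝ} (hs : 0 ≤ s) (ht : 0 ≤ t) :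
    a * s + b * t ≤ max a b * (s + t) := by
  have := mul_le_mul_of_nonneg_right (le_max_left a b) hs
  have := mul_le_mul_of_nonneg_right (le_max_right a b) ht
  linarith

section Penalty

variable {m n k : Type*} [Fintype m] [Fintype n] [Fintype k]

theorem penalty_bregman_eq (A : Matrix m n ℝ) (W : Matrix m k ℝ) (r γ : ℝ) (b : m → ℝ)
    (x x' : n → ℝ) (y y' : k → ℝ) :
    r / 2 * ((A *ᵥ x' + γ • W *ᵥ y' - b) ⬝ᵥ (A *ᵥ x' + γ • W *ᵥ y' - b))
        - r / 2 * ((A *ᵥ x + γ • W *ᵥ y - b) ⬝ᵥ (A *ᵥ x + γ • W *ᵥ y - b))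
        - (r • Aᵀ *ᵥ (A *ᵥ x + γ • W *ᵥ y - b)) ⬝ᵥ (x' - x)
        - ((r * γ) • Wᵀ *ᵥ (A *ᵥ x + γ • W *ᵥ y - b)) ⬝ᵥ (y' - y)
      = r / 2 * ((A *ᵥ (x' - x) + γ • W *ᵥ (y' - y)) ⬝ᵥ (A *ᵥ (x' - x) + γ • W *ᵥ (y' - y))) := by
  have hres : A *ᵥ x' + γ • W *ᵥ y' - b
      = (A *ᵥ x + γ • W *ᵥ y - b) + (A *ᵥ (x' - x) + γ • W *ᵥ (y' - y)) := by
    simp only [mulVec_sub, smul_sub]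
    abel
  rw [hres, dotProduct_add_self]
  simp only [smul_dotProduct, mulVec_transpose, ← dotProduct_mulVec, dotProduct_add,
    dotProduct_smul, smul_eq_mul]
  ring

theorem penalty_sq_le {LA LW : ℝ} (A : Matrix m n ℝ) (W : Matrix m k ℝ) (γ : ℝ)
    (hA : ∀ v, A *ᵥ v ⬝ᵥ A *ᵥ v ≤ LA * (v ⬝ᵥ v)) (hW : ∀ w, W *ᵥ w ⬝ᵥ W *ᵥ w ≤ LW * (w ⬝ᵥ w))
    (v : n → ℝ) (w : k → ℝ) :
    (A *ᵥ v + γ • W *ᵥ w) ⬝ᵥ (A *ᵥ v + γ • W *ᵥ w)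
      ≤ 2 * LA * (v ⬝ᵥ v) + 2 * γ ^ 2 * LW * (w ⬝ᵥ w) := by
  have hsmul : (γ • W *ᵥ w) ⬝ᵥ (γ • W *ᵥ w) = γ ^ 2 * (W *ᵥ w ⬝ᵥ W *ᵥ w) := by
    simp only [smul_dotProduct, dotProduct_smul, smul_eq_mul]
    ring
  have hsplit := dotProduct_add_self_le (A *ᵥ v) (γ • W *ᵥ w)
  rw [hsmul] at hsplit
  linarith [hA v, mul_le_mul_of_nonneg_left (hW w) (sq_nonneg γ)]

end Penalty

theorem stmt6_general (d p : ℕ) (μf Lf LA μA LW μW r γ : ℝ)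
    (hμf : 0 < μf) (hμA : 0 < μA) (hμALA : μA ≤ LA)
    (F : (Fin d → ℝ) → ℝ) (gF : (Fin d → ℝ) → (Fin d → ℝ))
    (hF : ∀ x x' : Fin d → ℝ,
      μf / 2 * ((x' - x) ⬝ᵥ (x' - x)) ≤ F x' - F x - (gF x ⬝ᵥ (x' - x)) ∧
      F x' - F x - (gF x ⬝ᵥ (x' - x)) ≤ Lf / 2 * ((x' - x) ⬝ᵥ (x' - x)))
    (A : Matrix (Fin p) (Fin d) ℝ)
    (hA : ∀ v : Fin d → ℝ, (A.mulVec v) ⬝ᵥ (A.mulVec v) ≤ LA * (v ⬝ᵥ v))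
    (W' : Matrix (Fin p) (Fin p) ℝ) (hWsymm : W'ᵀ = W')
    (hWhigh : ∀ y : Fin p → ℝ, (W'.mulVec y) ⬝ᵥ (W'.mulVec y) ≤ LW * (y ⬝ᵥ y))
    (hr : r = μf / (2 * LA)) (hγ2 : γ ^ 2 = (μA + LA) / μW)
    (b : Fin p → ℝ)
    (G : (Fin d → ℝ) → (Fin p → ℝ) → ℝ)
    (hG : ∀ x y, G x y = F x +
      r / 2 * ((A.mulVec x + γ • W'.mulVec y - b) ⬝ᵥ (A.mulVec x + γ • W'.mulVec y - b))) :
    ∀ (x x' : Fin d → ℝ) (y y' : Fin p → ℝ),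
      G x' y' - G x y
          - ((gF x + r • Aᵀ.mulVec (A.mulVec x + γ • W'.mulVec y - b)) ⬝ᵥ (x' - x))
          - (((r * γ) • W'.mulVec (A.mulVec x + γ • W'.mulVec y - b)) ⬝ᵥ (y' - y))
        ≤ 1 / 2 * max (Lf + μf) (μf * ((μA + LA) / LA) * (LW / μW))
          * ((x' - x) ⬝ᵥ (x' - x) + (y' - y) ⬝ᵥ (y' - y)) := by
  intro x x' y y'
  have hLA : 0 < LA := hμA.trans_le hμALA
  have hr0 : 0 ≤ r := hr ▸ by positivity
  have hrLA : r * LA = μf / 2 := by rw [hr]; field_simp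
  have hrW : r * γ ^ 2 * LW = 1 / 2 * (μf * ((μA + LA) / LA) * (LW / μW)) := by
    rw [hr, hγ2]; ring
  have hpen := penalty_bregman_eq A W' r γ b x x' y y'
  rw [hWsymm] at hpen
  have hsq := mul_le_mul_of_nonneg_left (penalty_sq_le A W' γ hA hWhigh (x' - x) (y' - y))
    (div_nonneg hr0 zero_le_two)
  calc _ = (F x' - F x - gF x ⬝ᵥ (x' - x))
        + r / 2 * ((A *ᵥ (x' - x) + γ • W' *ᵥ (y' - y)) ⬝ᵥ (A *ᵥ (x' - x) + γ • W' *ᵥ (y' - y)))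
          := by
        rw [hG, hG, add_dotProduct, ← hpen]; ring
    _ ≤ (Lf + μf) / 2 * ((x' - x) ⬝ᵥ (x' - x))
        + 1 / 2 * (μf * ((μA + LA) / LA) * (LW / μW)) * ((y' - y) ⬝ᵥ (y' - y)) := by
        linear_combination (hF x x').2 + hsq
          + ((x' - x) ⬝ᵥ (x' - x)) * hrLA + ((y' - y) ⬝ᵥ (y' - y)) * hrW
    _ ≤ _ := by
        have := mul_add_mul_le_max_mul_add (a := Lf + μf) (b := μf * ((μA + LA) / LA) * (LW / μW))
          (dotProduct_self_nonneg (x' - x)) (dotProduct_self_nonneg (y' - y))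
        linarith

/-- Lemma 1, upper bound: with `r = μ_f/(2L_A)`, `γ² = (μ_A+L_A)/μ_{W'}`,
`G(x,y) = F(x) + (r/2)‖Ax + γW'y − b‖²` satisfies, for all `x,x',y,y'`, the Bregman divergence upper bound
`D_G(x',y';x,y) ≤ (1/2)·max{L_f+μ_f, μ_f·((μ_A+L_A)/L_A)·(L_{W'}/μ_{W'})}·(‖x'−x‖² + ‖y'−y‖²)`.
Here squared norms and inner products are written via `⬝ᵥ`, `F` is `μ_f`-strongly convex
and `L_f`-smooth with gradient `gF`, `σ_max²(A) ≤ L_A`, `W'` is symmetric PSD with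
`λ_min⁺(W')² ≥ μ_{W'}` and `λ_max(W')² ≤ L_{W'}`, and the gradient of `G` at `(x,y)` is
`(gF x + r·Aᵀ(res), rγ·W'(res))` with `res = Ax + γW'y − b`. -/
theorem stmt6 (d p : ℕ) (μf Lf LA μA LW μW r γ : ℝ)
    (hμf : 0 < μf) (hμfLf : μf ≤ Lf) (hμA : 0 < μA) (hμALA : μA ≤ LA)
    (hμW : 0 < μW) (hμWLW : μW ≤ LW)
    (F : (Fin d → ℝ) → ℝ) (gF : (Fin d → ℝ) → (Fin d → ℝ))
    (hF : ∀ x x' : Fin d → ℝ,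
      μf / 2 * ((x' - x) ⬝ᵥ (x' - x)) ≤ F x' - F x - (gF x ⬝ᵥ (x' - x)) ∧
      F x' - F x - (gF x ⬝ᵥ (x' - x)) ≤ Lf / 2 * ((x' - x) ⬝ᵥ (x' - x)))
    (A : Matrix (Fin p) (Fin d) ℝ)
    (hA : ∀ v : Fin d → ℝ, (A.mulVec v) ⬝ᵥ (A.mulVec v) ≤ LA * (v ⬝ᵥ v))
    (W' : Matrix (Fin p) (Fin p) ℝ) (hWsymm : W'ᵀ = W') (hWpsd : W'.PosSemidef)
    (hWlow : ∀ y ∈ Set.range W'.mulVec,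
      μW * (y ⬝ᵥ y) ≤ (W'.mulVec y) ⬝ᵥ (W'.mulVec y))
    (hWhigh : ∀ y : Fin p → ℝ, (W'.mulVec y) ⬝ᵥ (W'.mulVec y) ≤ LW * (y ⬝ᵥ y))
    (hr : r = μf / (2 * LA)) (hγ : 0 ≤ γ) (hγ2 : γ ^ 2 = (μA + LA) / μW)
    (b : Fin p → ℝ)
    (G : (Fin d → ℝ) → (Fin p → ℝ) → ℝ)
    (hG : ∀ x y, G x y = F x +
      r / 2 * ((A.mulVec x + γ • W'.mulVec y - b) ⬝ᵥ (A.mulVec x + γ • W'.mulVec y - b))) :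
    ∀ (x x' : Fin d → ℝ) (y y' : Fin p → ℝ),
      G x' y' - G x y
          - ((gF x + r • Aᵀ.mulVec (A.mulVec x + γ • W'.mulVec y - b)) ⬝ᵥ (x' - x))
          - (((r * γ) • W'.mulVec (A.mulVec x + γ • W'.mulVec y - b)) ⬝ᵥ (y' - y))
        ≤ 1 / 2 * max (Lf + μf) (μf * ((μA + LA) / LA) * (LW / μW))
          * ((x' - x) ⬝ᵥ (x' - x) + (y' - y) ⬝ᵥ (y' - y)) :=
  stmt6_general d p μf Lf LA μA LW μW r γ hμf hμA hμALA F gF hF A hA W' hWsymm hWhigh hr hγ2 b G hG
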